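/- arXiv:0911.1538 — 4 statements merged into one kernel-verified Lean document; each statement's English description precedes it below -/
import Mathlib

section
/- Let f : ℝ × ℝ → ℝ be 1-periodic in the first variable and satisfy the L¹-Carathéodory conditions on [0,1] × ℝ. Suppose the equation x' = f(t,x) admits a subharmonic solution of order m for some integer m > 1, i.e. there exist a Carathéodory solution x and an integer m ≥ 2 with x(t+m) = x(t) for all t ∈ ℝ and x(t₁+1) ≠ x(t₁) for some t₁ ∈ ℝ. Then for every integer n ≥ 1 there exists a Carathéodory solution xₙ of x' = f(t,x) with xₙ(t+n) = xₙ(t) for all t ∈ ℝ and such that no integer k with 1 ≤ k < n satisfies xₙ(t+k) = xₙ(t) for all t ∈ ℝ. -/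
open MeasureTheory

/-- `x` is a Carathéodory solution of `x' = f(t,x)`: a continuous function satisfying
the associated integral equation. -/
def IsCaratheodorySolution (f : ℝ × ℝ → ℝ) (x : ℝ → ℝ) : Prop :=
  Continuous x ∧ ∀ t : ℝ, x t = x 0 + ∫ s in (0:ℝ)..t, f (s, x s)

/-!
The displacement `x (t + 1) - x t` of an `m`-periodic solution cannot keep a sign, so it vanishes
at some `γ`, and repeating `x` on `[γ, γ + 1]` gives a `1`-periodic solution `Z`. As `x` is not
`1`-periodic, it leaves `Z` on an interval `(c, d)` and meets it at both ends. Following `x` from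
`c` and switching, where they cross, to its translate by `k = ⌈d - c⌉ - 1` periods gives a solution
that differs from `Z` exactly on an interval of length at most one. Its `n`-periodic repetition
differs from `Z` at some `σ` but agrees with it at `σ + 1, …, σ + n - 1`, so no smaller integer is
a period.
-/

open Set Function

lemma IsPreconnected.forall_pos_or_forall_neg {X : Type*} [TopologicalSpace X] {s : Set X}
    (hs : IsPreconnected s) {g : X → ℝ} (hg : ContinuousOn g s) (hg0 : ∀ t ∈ s, g t ≠ 0) :
    (∀ t ∈ s, 0 < g t) ∨ ∀ t ∈ s, g t < 0 := by
  by_contra! h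
  obtain ⟨⟨a, ha, hga⟩, b, hb, hgb⟩ := h
  obtain ⟨t, hts, ht⟩ := hs.intermediate_value ha hb hg ⟨hga, hgb⟩
  exact hg0 t hts ht

lemma Function.Periodic.exists_map_add_one_eq {x : ℝ → ℝ} (hx : Continuous x) {m : ℕ}
    (hm : m ≠ 0) (hxm : Periodic x m) : ∃ γ, x (γ + 1) = x γ := by
  have not_strictMono (y : ℝ → ℝ) (hy : Periodic y m) : ¬∀ t, y t < y (t + 1) := fun hlt => by
    have hmono : StrictMono fun k : ℕ => y k :=
      strictMono_nat_of_lt_succ fun k => by simpa using hlt k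
    have h0m := hmono (Nat.pos_of_ne_zero hm)
    have := hy 0
    simp only [Nat.cast_zero, zero_add] at h0m this
    exact h0m.ne' this
  by_contra! h
  rcases isPreconnected_univ.forall_pos_or_forall_neg
    ((hx.comp (continuous_add_const 1)).sub hx).continuousOn
    (fun t _ => sub_ne_zero.2 (h t)) with hpos | hneg
  · exact not_strictMono x hxm fun t => sub_pos.1 (hpos t trivial)
  · exact not_strictMono (-x) (fun t => congrArg Neg.neg (hxm t))
      fun t => neg_lt_neg (sub_neg.1 (hneg t trivial))

lemma exists_Ioo_between_zeros {B : ℝ → ℝ} (hB : Continuous B) {a σ b : ℝ} (ha : a ≤ σ)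
    (hb : σ ≤ b) (hBa : B a = 0) (hBb : B b = 0) (hσ : B σ ≠ 0) :
    ∃ c d, σ ∈ Ioo c d ∧ B c = 0 ∧ B d = 0 ∧ ∀ t ∈ Ioo c d, B t ≠ 0 := by
  have hE : IsClosed (B ⁻¹' {0}) := isClosed_singleton.preimage hB
  have hbdd : BddAbove (B ⁻¹' {0} ∩ Iic σ) := ⟨σ, fun t ht => ht.2⟩
  have hbdd' : BddBelow (B ⁻¹' {0} ∩ Ici σ) := ⟨σ, fun t ht => ht.2⟩
  obtain ⟨hc, hcσ⟩ := (hE.inter isClosed_Iic).csSup_mem ⟨a, hBa, ha⟩ hbdd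
  obtain ⟨hd, hσd⟩ := (hE.inter isClosed_Ici).csInf_mem ⟨b, hBb, hb⟩ hbdd'
  refine ⟨_, _, ⟨hcσ.lt_of_ne fun h => hσ (h ▸ hc), hσd.lt_of_ne fun h => hσ (h ▸ hd)⟩,
    hc, hd, fun t ht hBt => ?_⟩
  rcases le_total t σ with htσ | hσt
  · exact (le_csSup hbdd ⟨hBt, htσ⟩).not_gt ht.1
  · exact (csInf_le hbdd' ⟨hBt, hσt⟩).not_gt ht.2

lemma Function.Periodic.exists_Ioo_between_zeros {B : ℝ → ℝ} (hB : Continuous B) {p : ℝ}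
    (hp : 0 < p) (hBp : Periodic B p) {γ σ : ℝ} (hγ : B γ = 0) (hσ : B σ ≠ 0) :
    ∃ c d, σ ∈ Ioo c d ∧ B c = 0 ∧ B d = 0 ∧ ∀ t ∈ Ioo c d, B t ≠ 0 := by
  obtain ⟨j, hj, -⟩ := existsUnique_sub_zsmul_mem_Ico hp σ γ
  refine _root_.exists_Ioo_between_zeros hB (a := γ + j • p) (b := γ + (j + 1) • p)
    (by linarith [hj.1]) (by rw [add_zsmul, one_zsmul]; linarith [hj.2]) ?_ ?_ hσ
  · rw [(hBp.zsmul j) γ, hγ]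
  · rw [(hBp.zsmul (j + 1)) γ, hγ]

lemma exists_add_eq_of_ne_zero_on_Ioo {B : ℝ → ℝ} (hB : Continuous B) {c d k : ℝ} (hk : 0 ≤ k)
    (hkd : k < d - c) (hBc : B c = 0) (hBd : B d = 0) (hne : ∀ t ∈ Ioo c d, B t ≠ 0) :
    ∃ w ∈ Icc c (d - k), B (w + k) = B w := by
  wlog hpos : ∀ t ∈ Ioo c d, 0 < B t generalizing B
  · rcases isPreconnected_Ioo.forall_pos_or_forall_neg hB.continuousOn hne with hpos' | hneg
    · exact this hB hBc hBd hne hpos'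
    obtain ⟨w, hw, hBw⟩ := this hB.neg (by simp [hBc]) (by simp [hBd])
      (fun t ht => neg_ne_zero.2 (hne t ht)) fun t ht => neg_pos.2 (hneg t ht)
    exact ⟨w, hw, neg_inj.1 hBw⟩
  rcases hk.eq_or_lt with rfl | hk
  · exact ⟨c, ⟨le_rfl, by linarith⟩, by rw [add_zero]⟩
  -- `B (· + k) - B` is positive at `c` and negative at `d - k`
  obtain ⟨w, hw, hw0⟩ := intermediate_value_Icc' (by linarith)
    ((hB.comp (continuous_add_const k)).sub hB).continuousOn
    (show (0 : ℝ) ∈ Icc (B (d - k + k) - B (d - k)) (B (c + k) - B c) from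
      ⟨by rw [sub_add_cancel, hBd]; linarith [hpos (d - k) ⟨by linarith, by linarith⟩],
        by linarith [hpos (c + k) ⟨by linarith, by linarith⟩]⟩)
  exact ⟨w, hw, sub_eq_zero.1 hw0⟩

lemma Function.Periodic.ae_of_ae_restrict_Ico {P : ℝ → Prop} (hP : Periodic P 1)
    (h : ∀ᵐ t ∂volume.restrict (Ico 0 1), P t) : ∀ᵐ t, P t := by
  rw [ae_iff, Measure.restrict_apply' measurableSet_Ico] at h
  refine ae_iff.2 <| measure_mono_null (fun t (ht : ¬P t) => mem_iUnion.2 ⟨-⌊t⌋, ?_⟩)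
    (measure_iUnion_null fun j : ℤ => (measure_preimage_add_right _ (j : ℝ) _).trans h)
  have hfract : t + ((-⌊t⌋ : ℤ) : ℝ) = Int.fract t := by push_cast; rw [Int.fract]; ring
  refine ⟨?_, show t + ((-⌊t⌋ : ℤ) : ℝ) ∈ Ico 0 1 from
    hfract ▸ ⟨Int.fract_nonneg t, Int.fract_lt_one t⟩⟩
  show ¬P (t + ((-⌊t⌋ : ℤ) : ℝ))
  rwa [← mul_one ((-⌊t⌋ : ℤ) : ℝ), hP.int_mul]

lemma aemeasurable_comp_of_caratheodory {f : ℝ × ℝ → ℝ}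
    (hmeas : ∀ x, Measurable fun t => f (t, x)) (hcont : ∀ᵐ t, Continuous fun x => f (t, x))
    {q : ℝ → ℝ} (hq : Measurable q) : AEMeasurable fun s => f (s, q s) := by
  set N := toMeasurable volume {t | ¬Continuous fun x => f (t, x)}
  have hN : volume N = 0 := by rw [measure_toMeasurable]; exact ae_iff.1 hcont
  -- off the null set `N`, `f` is continuous in `x`, which makes it jointly measurable
  let g : ℝ → ℝ → ℝ := fun x => Nᶜ.indicator fun t => f (t, x)
  have hg : Measurable (uncurry g) := by
    refine measurable_uncurry_of_continuous_of_measurable (fun t => ?_) fun x => ?_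
    · by_cases ht : t ∈ N
      · simp only [g, indicator_of_notMem (notMem_compl_iff.2 ht), continuous_const]
      · simp only [g, indicator_of_mem (mem_compl ht)]
        by_contra h
        exact ht (subset_toMeasurable _ _ h)
    · exact (hmeas x).indicator (measurableSet_toMeasurable _ _).compl
  refine ⟨fun s => g (q s) s, hg.comp (hq.prodMk measurable_id), ?_⟩
  filter_upwards [measure_eq_zero_iff_ae_notMem.1 hN] with s hs
  simp only [g, indicator_of_mem (mem_compl hs)]

lemma locallyIntegrable_comp_of_caratheodory {f : ℝ × ℝ → ℝ}
    (hper : ∀ t x : ℝ, f (t + 1, x) = f (t, x))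
    (hmeas : ∀ x : ℝ, Measurable fun t => f (t, x))
    (hcont : ∀ᵐ t ∂(volume.restrict (Icc (0:ℝ) 1)), Continuous fun x => f (t, x))
    (hbound : ∀ r : ℝ, 0 < r → ∃ g : ℝ → ℝ, IntegrableOn g (Icc (0:ℝ) 1) ∧
      ∀ᵐ t ∂(volume.restrict (Icc (0:ℝ) 1)), ∀ x : ℝ, |x| ≤ r → |f (t, x)| ≤ g t)
    {q : ℝ → ℝ} (hq : Continuous q) : LocallyIntegrable fun s => f (s, q s) := by
  have hmeas_q : AEMeasurable fun s => f (s, q s) :=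
    aemeasurable_comp_of_caratheodory hmeas
      (Periodic.ae_of_ae_restrict_Ico (fun t => by simp only [hper])
        (ae_restrict_of_ae_restrict_of_subset Ico_subset_Icc_self hcont)) hq.measurable
  intro t₀
  refine ⟨Icc (t₀ - 1) (t₀ + 1), Icc_mem_nhds (by linarith) (by linarith), ?_⟩
  obtain ⟨C, hC⟩ := (isCompact_Icc (a := t₀ - 1) (b := t₀ + 1)).exists_bound_of_continuousOn
    hq.continuousOn
  obtain ⟨g, hg, hfg⟩ := hbound (|C| + 1) (by positivity)
  -- the periodic extension of `g` dominates `f` along `q`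
  set G : ℝ → ℝ := fun t => g (Int.fract t)
  have hGper : Periodic G 1 := fun t => by simp only [G, Int.fract_add_one]
  have hGg : EqOn g G (Ico 0 1) := fun t ht => by simp only [G, Int.fract_eq_self.2 ht]
  have hG : IntegrableOn G (Icc (t₀ - 1) (t₀ + 1)) := by
    have h01 : IntervalIntegrable G volume 0 (0 + 1) := by
      rw [zero_add, intervalIntegrable_iff_integrableOn_Ico_of_le zero_le_one]
      exact (hg.mono_set Ico_subset_Icc_self).congr_fun hGg measurableSet_Ico
    exact (intervalIntegrable_iff_integrableOn_Icc_of_le (by linarith)).1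
      (hGper.intervalIntegrable one_ne_zero h01 _ _)
  have hfG : ∀ᵐ t, ∀ x : ℝ, |x| ≤ |C| + 1 → |f (t, x)| ≤ G t := by
    refine Periodic.ae_of_ae_restrict_Ico (fun t => by simp only [hper, hGper t]) ?_
    filter_upwards [ae_restrict_of_ae_restrict_of_subset Ico_subset_Icc_self hfg,
      ae_restrict_mem measurableSet_Ico] with t ht htI
    rwa [← hGg htI]
  refine hG.mono' hmeas_q.restrict.aestronglyMeasurable ?_
  filter_upwards [ae_restrict_of_ae hfG, ae_restrict_mem measurableSet_Icc] with s hs hsI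
  refine hs (q s) ?_
  linarith [hC s hsI, le_abs_self C, Real.norm_eq_abs (q s)]

lemma MeasureTheory.LocallyIntegrable.intervalIntegrable {E : Type*} [NormedAddCommGroup E]
    {g : ℝ → E} {μ : Measure ℝ} (hg : LocallyIntegrable g μ) (a b : ℝ) :
    IntervalIntegrable g μ a b :=
  (hg.integrableOn_isCompact isCompact_uIcc).intervalIntegrable

namespace IsCaratheodorySolution

variable {f : ℝ × ℝ → ℝ} {q : ℝ → ℝ}

lemma sub_eq_integral (hq : IsCaratheodorySolution f q)
    (hint : LocallyIntegrable fun s => f (s, q s)) (a b : ℝ) :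
    q b - q a = ∫ s in a..b, f (s, q s) := by
  rw [← intervalIntegral.integral_interval_sub_left (hint.intervalIntegrable 0 b)
    (hint.intervalIntegrable 0 a)]
  linarith [hq.2 a, hq.2 b]

lemma of_sub_eq_integral (hq : Continuous q) (hint : LocallyIntegrable fun s => f (s, q s))
    (c : ℝ) (h : ∀ t, q t - q c = ∫ s in c..t, f (s, q s)) : IsCaratheodorySolution f q := by
  refine ⟨hq, fun t => ?_⟩
  rw [← intervalIntegral.integral_interval_sub_left (hint.intervalIntegrable c t)
    (hint.intervalIntegrable c 0), ← h t, ← h 0]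
  ring

lemma sub_eq_integral_of_eqOn {p : ℝ → ℝ} (hq : IsCaratheodorySolution f q)
    (hint : LocallyIntegrable fun s => f (s, q s)) {a b : ℝ} (hpq : EqOn p q (uIcc a b)) :
    p b - p a = ∫ s in a..b, f (s, p s) := by
  rw [hpq right_mem_uIcc, hpq left_mem_uIcc, hq.sub_eq_integral hint]
  exact intervalIntegral.integral_congr fun s hs => by simp only [hpq hs]

variable (hf : ∀ p : ℝ → ℝ, Continuous p → LocallyIntegrable fun s => f (s, p s))
include hf

lemma comp_add_right {T : ℝ} (hfT : ∀ t x, f (t + T, x) = f (t, x))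
    (hq : IsCaratheodorySolution f q) : IsCaratheodorySolution f fun t => q (t + T) := by
  have hqT : Continuous fun t => q (t + T) := hq.1.comp (continuous_add_const T)
  refine of_sub_eq_integral hqT (hf _ hqT) 0 fun t => ?_
  rw [intervalIntegral.integral_congr (g := fun s => f (s + T, q (s + T)))
    fun s _ => (hfT _ _).symm, intervalIntegral.integral_comp_add_right fun s => f (s, q s),
    hq.sub_eq_integral (hf q hq.1), zero_add]

lemma exists_eqOn_Iic_eqOn_Ici {q₁ q₂ : ℝ → ℝ} (hq₁ : IsCaratheodorySolution f q₁)
    (hq₂ : IsCaratheodorySolution f q₂) {c : ℝ} (hc : q₁ c = q₂ c) :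
    ∃ q, IsCaratheodorySolution f q ∧ EqOn q q₁ (Iic c) ∧ EqOn q q₂ (Ici c) := by
  set q := fun t => if t ≤ c then q₁ t else q₂ t
  have h₁ : EqOn q q₁ (Iic c) := fun t ht => if_pos ht
  have h₂ : EqOn q q₂ (Ici c) := fun t (ht : c ≤ t) => by
    rcases ht.eq_or_lt with rfl | ht
    · exact (if_pos le_rfl).trans hc
    · exact if_neg ht.not_ge
  have hqc : Continuous q :=
    hq₁.1.if_le hq₂.1 continuous_id continuous_const fun t ht => ht ▸ hc
  refine ⟨q, of_sub_eq_integral hqc (hf q hqc) c fun t => ?_, h₁, h₂⟩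
  rcases le_total t c with htc | hct
  · exact hq₁.sub_eq_integral_of_eqOn (hf q₁ hq₁.1)
      (h₁.mono fun s hs => (uIcc_of_ge htc ▸ hs).2)
  · exact hq₂.sub_eq_integral_of_eqOn (hf q₂ hq₂.1)
      (h₂.mono fun s hs => (uIcc_of_le hct ▸ hs).1)

lemma exists_periodic_eqOn {T : ℝ} (hT : 0 < T) (hfT : ∀ t x, f (t + T, x) = f (t, x))
    (hq : IsCaratheodorySolution f q) {c : ℝ} (hc : q c = q (c + T)) :
    ∃ Q, IsCaratheodorySolution f Q ∧ Periodic Q T ∧ EqOn Q q (Icc c (c + T)) := by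
  have := Fact.mk hT
  set Q : ℝ → ℝ := fun t => AddCircle.liftIco T c q t
  have hQper : Periodic Q T := fun t => by simp only [Q, AddCircle.coe_add_period]
  have hQq : EqOn Q q (Icc c (c + T)) := fun t ht => by
    rcases ht.2.eq_or_lt with rfl | ht'
    · rw [hQper c, ← hc]
      exact AddCircle.liftIco_coe_apply ⟨le_rfl, by linarith⟩
    · exact AddCircle.liftIco_coe_apply ⟨ht.1, ht'⟩
  have hQc : Continuous Q :=
    (AddCircle.liftIco_continuous hc hq.1.continuousOn).comp (AddCircle.continuous_mk' T)
  -- the defect `F` of the integral equation vanishes on one period and is periodic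
  set F : ℝ → ℝ := fun t => Q t - Q c - ∫ s in c..t, f (s, Q s)
  have hF0 : ∀ t ∈ Icc c (c + T), F t = 0 := fun t ht => sub_eq_zero.2 <|
    hq.sub_eq_integral_of_eqOn (hf q hq.1) (hQq.mono (uIcc_subset_Icc ⟨le_rfl, by linarith⟩ ht))
  have hFper : Periodic F T := fun t => by
    have hperiod : ∫ s in t..t + T, f (s, Q s) = ∫ s in c..c + T, f (s, Q s) :=
      Periodic.intervalIntegral_add_eq (fun s => by simp only [hQper s, hfT]) t c
    have hsplit := intervalIntegral.integral_add_adjacent_intervals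
      ((hf Q hQc).intervalIntegrable c t) ((hf Q hQc).intervalIntegrable t (t + T))
    have hcT : F (c + T) = 0 := hF0 _ ⟨by linarith, le_rfl⟩
    simp only [F, hQper t] at hcT ⊢
    linarith [hQper c]
  refine ⟨Q, of_sub_eq_integral hQc (hf Q hQc) c fun t => ?_, hQper, hQq⟩
  obtain ⟨t', ht', hFt⟩ := hFper.exists_mem_Ico hT t c
  exact sub_eq_zero.1 (hFt.trans (hF0 t' (Ico_subset_Icc_self ht')))

end IsCaratheodorySolution

section Subharmonics

variable {f : ℝ × ℝ → ℝ}

lemma map_add_natCast_fst_eq (hper : ∀ t x : ℝ, f (t + 1, x) = f (t, x)) (k : ℕ) (t x : ℝ) :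
    f (t + k, x) = f (t, x) := by
  simpa using Periodic.nat_mul (f := fun t => f (t, x)) (fun t => hper t x) k t

variable (hf : ∀ p : ℝ → ℝ, Continuous p → LocallyIntegrable fun s => f (s, p s))
  (hper : ∀ t x : ℝ, f (t + 1, x) = f (t, x))
include hf hper

lemma exists_solution_short_excursion {x Z : ℝ → ℝ} (hx : IsCaratheodorySolution f x)
    (hZ : IsCaratheodorySolution f Z) (hZper : Periodic Z 1) {c d : ℝ} (hcd : c < d)
    (hc : x c = Z c) (hd : x d = Z d) (hne : ∀ t ∈ Ioo c d, x t ≠ Z t) :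
    ∃ y d', IsCaratheodorySolution f y ∧ d' ≤ c + 1 ∧ (∀ t ∉ Ioo c d', y t = Z t) ∧
      ∃ σ ∈ Ioo c d', y σ ≠ Z σ := by
  set k : ℕ := ⌈d - c⌉₊ - 1
  have hk : (k : ℝ) < d - c ∧ d - c ≤ k + 1 := by
    have hceil : 1 ≤ ⌈d - c⌉₊ := Nat.one_le_iff_ne_zero.2 (by simpa using hcd)
    have hk1 : (k : ℝ) + 1 = ⌈d - c⌉₊ := by simp only [k]; push_cast [hceil]; ring
    exact ⟨by linarith [Nat.ceil_lt_add_one (sub_nonneg.2 hcd.le)],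
      by linarith [Nat.le_ceil (d - c)]⟩
  have hZk : Periodic Z k := by simpa using hZper.nat_mul k
  obtain ⟨w, ⟨hcw, hwd⟩, hw⟩ := exists_add_eq_of_ne_zero_on_Ioo (hx.1.sub hZ.1) k.cast_nonneg
    hk.1 (sub_eq_zero.2 hc) (sub_eq_zero.2 hd) fun t ht => sub_ne_zero.2 (hne t ht)
  have hxw : x (w + k) = x w := by
    simp only [Pi.sub_apply, hZk w] at hw
    linarith
  have hxk := hx.comp_add_right hf (map_add_natCast_fst_eq hper k)
  obtain ⟨y₁, hy₁, hy₁Z, hy₁x⟩ :=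
    IsCaratheodorySolution.exists_eqOn_Iic_eqOn_Ici hf hZ hx hc.symm
  obtain ⟨y₂, hy₂, hy₂y₁, hy₂x⟩ := IsCaratheodorySolution.exists_eqOn_Iic_eqOn_Ici hf hy₁ hxk
    (show y₁ w = x (w + k) by rw [hy₁x hcw, hxw])
  obtain ⟨y, hy, hyy₂, hyZ⟩ := IsCaratheodorySolution.exists_eqOn_Iic_eqOn_Ici hf hy₂ hZ
    (show y₂ (d - k) = Z (d - k) by rw [hy₂x hwd, ← hZk (d - k)]; simp only [sub_add_cancel, hd])
  obtain ⟨σ, hcσ, hσd⟩ := exists_between (show c < d - k by linarith [hk.1])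
  refine ⟨y, d - k, hy, by linarith [hk.2], fun t ht => ?_, σ, ⟨hcσ, hσd⟩, ?_⟩
  · rcases not_and_or.1 ht with htc | htd
    · have htc : t ≤ c := not_lt.1 htc
      rw [hyy₂ (htc.trans (hcw.trans hwd)), hy₂y₁ (htc.trans hcw), hy₁Z htc]
    · exact hyZ (not_lt.1 htd)
  · have hk0 : (0 : ℝ) ≤ k := k.cast_nonneg
    rw [hyy₂ hσd.le]
    rcases le_total σ w with hσw | hwσ
    · rw [hy₂y₁ hσw, hy₁x hcσ.le]
      exact hne σ ⟨hcσ, by linarith⟩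
    · rw [hy₂x hwσ, ← hZk σ]
      exact hne _ ⟨by linarith, by linarith⟩

lemma exists_solution_minimal_period {Z y : ℝ → ℝ} (hZper : Periodic Z 1)
    (hy : IsCaratheodorySolution f y) {c d σ : ℝ} (hdc : d ≤ c + 1)
    (hyZ : ∀ t ∉ Ioo c d, y t = Z t) (hσ : σ ∈ Ioo c d) (hyσ : y σ ≠ Z σ) {n : ℕ} (hn : 1 ≤ n) :
    ∃ xn, IsCaratheodorySolution f xn ∧ Periodic xn n ∧
      ∀ k : ℕ, 1 ≤ k → k < n → ¬Periodic xn k := by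
  have hn' : (1 : ℝ) ≤ n := by exact_mod_cast hn
  have hZnat (k : ℕ) : Periodic Z k := by simpa using hZper.nat_mul k
  have hyc : y c = y (c + n) := by
    rw [hyZ c fun h => h.1.false, hyZ (c + n) fun h => by linarith [h.2], hZnat n c]
  obtain ⟨Q, hQ, hQper, hQy⟩ :=
    hy.exists_periodic_eqOn hf (by positivity) (map_add_natCast_fst_eq hper n) hyc
  refine ⟨Q, hQ, hQper, fun k hk hkn hQk => hyσ ?_⟩
  have hk' : (1 : ℝ) ≤ k ∧ (k : ℝ) + 1 ≤ n := ⟨by exact_mod_cast hk, by exact_mod_cast hkn⟩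
  calc y σ = Q σ := (hQy ⟨hσ.1.le, by linarith [hσ.2]⟩).symm
    _ = Q (σ + k) := (hQk σ).symm
    _ = y (σ + k) := hQy ⟨by linarith [hσ.1], by linarith [hσ.2]⟩
    _ = Z (σ + k) := hyZ _ fun h => by linarith [h.2, hσ.1]
    _ = Z σ := hZnat k σ

end Subharmonics

theorem period_two_implies_all_periods_caratheodory
    (f : ℝ × ℝ → ℝ)
    (hper : ∀ t x : ℝ, f (t + 1, x) = f (t, x))
    (hmeas : ∀ x : ℝ, Measurable fun t => f (t, x))
    (hcont : ∀ᵐ t ∂(volume.restrict (Set.Icc (0:ℝ) 1)), Continuous fun x => f (t, x))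
    (hbound : ∀ r : ℝ, 0 < r → ∃ g : ℝ → ℝ, IntegrableOn g (Set.Icc (0:ℝ) 1) ∧
      ∀ᵐ t ∂(volume.restrict (Set.Icc (0:ℝ) 1)), ∀ x : ℝ, |x| ≤ r → |f (t, x)| ≤ g t)
    (x : ℝ → ℝ) (m : ℕ) (hm : 2 ≤ m)
    (hx : IsCaratheodorySolution f x)
    (hxm : ∀ t : ℝ, x (t + m) = x t)
    (t₁ : ℝ) (ht₁ : x (t₁ + 1) ≠ x t₁) :
    ∀ n : ℕ, 1 ≤ n → ∃ xn : ℝ → ℝ, IsCaratheodorySolution f xn ∧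
      (∀ t : ℝ, xn (t + n) = xn t) ∧
      ∀ k : ℕ, 1 ≤ k → k < n → ¬ (∀ t : ℝ, xn (t + k) = xn t) := by
  intro n hn
  have hf (q : ℝ → ℝ) (hq : Continuous q) : LocallyIntegrable fun s => f (s, q s) :=
    locallyIntegrable_comp_of_caratheodory hper hmeas hcont hbound hq
  obtain ⟨γ, hγ⟩ := Periodic.exists_map_add_one_eq hx.1 (by omega) hxm
  obtain ⟨Z, hZ, hZper, hZx⟩ := hx.exists_periodic_eqOn hf one_pos hper hγ.symm
  obtain ⟨σ, hσ⟩ : ∃ σ, x σ ≠ Z σ := by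
    by_contra! h
    exact ht₁ (by rw [h, h, hZper])
  have hxZ : Periodic (x - Z) m := Periodic.sub hxm (by simpa using hZper.nat_mul m)
  obtain ⟨c, d, hσcd, hc, hd, hne⟩ := hxZ.exists_Ioo_between_zeros (hx.1.sub hZ.1)
    (Nat.cast_pos.2 (by omega)) (sub_eq_zero.2 (hZx ⟨le_rfl, by linarith⟩).symm)
    (sub_ne_zero.2 hσ)
  obtain ⟨y, d', hy, hd', hyZ, σ', hσ', hyσ'⟩ := exists_solution_short_excursion hf hper hx hZ hZper
    (hσcd.1.trans hσcd.2) (sub_eq_zero.1 hc) (sub_eq_zero.1 hd)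
    fun t ht => sub_ne_zero.1 (hne t ht)
  exact exists_solution_minimal_period hf hper hZper hy hd' hyZ hσ' hyσ' hn
end

section
/- Let f : ℝ × ℝ → ℝ be continuous and 1-periodic in the time variable. Suppose the equation x' = f(t,x) admits a subharmonic solution of order 2, i.e. there exists a solution x with x(t+2) = x(t) for all t ∈ ℝ and x(t₁+1) ≠ x(t₁) for some t₁ ∈ ℝ. Then for every integer n ≥ 1 there exists a solution xₙ of x' = f(t,x) with xₙ(t+n) = xₙ(t) for all t ∈ ℝ and such that no integer k with 1 ≤ k < n satisfies xₙ(t+k) = xₙ(t) for all t ∈ ℝ. -/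
/-!
Translates by integers of a solution are solutions, since `f` is `1`-periodic in time. The
difference `d t = x (t + 1) - x t` satisfies `d (t + 1) = -d t`, so by the intermediate value
theorem it vanishes at some `t₀`, and `x` takes the same value at all points of `t₀ + ℤ`. Thus the
pieces `A` and `B` of `x` on `[t₀, t₀ + 1]` and `[t₀ + 1, t₀ + 2]` (so `x` reads `…ABAB…`) have
equal endpoint values, and any bi-infinite word in `A` and `B`, laid out on the intervals
`[t₀ + j, t₀ + j + 1]`, is again a solution. The word with `B` exactly at the positions divisible
by `n` has period `n`. For `0 < k < n` it has `B` at position `0` and `A` at position `k`, and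
these pieces differ at corresponding points because `d` has no zero on `t₁ + ℤ`; so `k` is not a
period.
-/

/-- `x` is a (classical) solution of the ODE `x' = f(t,x)` on the whole real line. -/
def IsSolution (f : ℝ × ℝ → ℝ) (x : ℝ → ℝ) : Prop :=
  ∀ t : ℝ, HasDerivAt x (f (t, x t)) t

open Function Set Filter Topology fwdDiff

theorem Function.Periodic.fwdDiff_antiperiodic {α β : Type*} [AddCommMonoid α] [AddCommGroup β]
    {x : α → β} {c : α} (h : Periodic x (c + c)) : Antiperiodic (Δ_[c] x) c := by
  intro t
  simp only [fwdDiff, add_assoc, h t]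
  abel

theorem Function.Antiperiodic.exists_eq_zero {g : ℝ → ℝ} {c : ℝ} (hg : Antiperiodic g c)
    (hc : Continuous g) : ∃ t, g t = 0 := by
  have h0 : (0 : ℝ) ∈ uIcc (g 0) (g (0 + c)) := by
    rw [hg 0, mem_uIcc]
    rcases le_total (g 0) 0 with h | h
    · exact Or.inl ⟨h, by linarith⟩
    · exact Or.inr ⟨by linarith, h⟩
  obtain ⟨t, -, ht⟩ := intermediate_value_uIcc hc.continuousOn h0
  exact ⟨t, ht⟩

theorem Function.Antiperiodic.add_int_mul_ne_zero {g : ℝ → ℝ} {c t : ℝ} (hg : Antiperiodic g c)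
    (h : g t ≠ 0) (m : ℤ) : g (t + m * c) ≠ 0 := by
  rw [hg.add_int_mul_eq]
  exact mul_ne_zero (by simp) h

theorem Function.Periodic.apply_add_intCast_eq {x : ℝ → ℝ} (h : Periodic x 2) {t₀ : ℝ}
    (h₀ : x (t₀ + 1) = x t₀) (m : ℤ) : x (t₀ + m) = x t₀ := by
  obtain ⟨k, rfl | rfl⟩ := Int.even_or_odd' m
  · simpa [mul_comm] using h.int_mul k t₀
  · have := h.int_mul k (t₀ + 1)
    push_cast
    rw [← h₀, ← this]
    ring_nf

theorem IsSolution.continuous {f : ℝ × ℝ → ℝ} {x : ℝ → ℝ} (hx : IsSolution f x) :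
    Continuous x :=
  continuous_iff_continuousAt.2 fun t => (hx t).continuousAt

theorem IsSolution.comp_add_intCast {f : ℝ × ℝ → ℝ} {x : ℝ → ℝ}
    (hper : ∀ t y : ℝ, f (t + 1, y) = f (t, y)) (hx : IsSolution f x) (m : ℤ) :
    IsSolution f (fun t => x (t + m)) := by
  intro t
  have hfm : f (t + m, x (t + m)) = f (t, x (t + m)) := by
    have hperiodic : Periodic (fun s => f (s, x (t + m))) 1 := fun s => hper s _
    simpa using hperiodic.int_mul m t
  simpa [hfm] using (hx (t + m)).comp_add_const t m

theorem IsSolution.glue_floor {f : ℝ × ℝ → ℝ} {y : ℤ → ℝ → ℝ} (t₀ : ℝ)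
    (hy : ∀ j, IsSolution f (y j)) (hjoin : ∀ j : ℤ, y (j - 1) (t₀ + j) = y j (t₀ + j)) :
    IsSolution f (fun t => y ⌊t - t₀⌋ t) := by
  set z := fun t => y ⌊t - t₀⌋ t
  have hagree : ∀ j : ℤ, EqOn z (y j) (Icc (t₀ + j) (t₀ + j + 1)) := by
    rintro j s ⟨hs₁, hs₂⟩
    rcases hs₂.lt_or_eq with hs₂ | rfl
    · have hfloor : ⌊s - t₀⌋ = j := Int.floor_eq_iff.2 ⟨by linarith, by linarith⟩
      simp only [z, hfloor]
    · have hfloor : ⌊t₀ + j + 1 - t₀⌋ = j + 1 := by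
        rw [show t₀ + j + 1 - t₀ = ((j + 1 : ℤ) : ℝ) by push_cast; ring, Int.floor_intCast]
      simpa [z, hfloor, add_assoc] using (hjoin (j + 1)).symm
  have hside : ∀ (j : ℤ) (S : Set ℝ) (t : ℝ), t ∈ Icc (t₀ + j) (t₀ + j + 1) →
      Icc (t₀ + j) (t₀ + j + 1) ∈ 𝓝[S] t → HasDerivWithinAt z (f (t, z t)) S t := by
    intro j S t ht hS
    rw [hagree j ht]
    exact (hy j t).hasDerivWithinAt.congr_of_eventuallyEq
      (eventually_of_mem hS (hagree j)) (hagree j ht)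
  intro t
  have hright : HasDerivWithinAt z (f (t, z t)) (Ici t) t := by
    have ht : t ∈ Ico (t₀ + ⌊t - t₀⌋) (t₀ + ⌊t - t₀⌋ + 1) :=
      ⟨by linarith [Int.floor_le (t - t₀)], by linarith [Int.lt_floor_add_one (t - t₀)]⟩
    exact hside _ _ t (Ico_subset_Icc_self ht) (Icc_mem_nhdsGE_of_mem ht)
  have hleft : HasDerivWithinAt z (f (t, z t)) (Iic t) t := by
    have ht : t ∈ Ioc (t₀ + (⌈t - t₀⌉ - 1 : ℤ)) (t₀ + (⌈t - t₀⌉ - 1 : ℤ) + 1) := by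
      push_cast
      exact ⟨by linarith [Int.ceil_lt_add_one (t - t₀)], by linarith [Int.le_ceil (t - t₀)]⟩
    exact hside _ _ t (Ioc_subset_Icc_self ht) (Icc_mem_nhdsLE_of_mem ht)
  simpa [Iic_union_Ici] using hleft.union hright

/-- On `[t₀ + j, t₀ + j + 1)` the function `splice x t₀ p` is the translate of the piece of `x`
on `[t₀ + p j, t₀ + p j + 1)`. -/
noncomputable def splice (x : ℝ → ℝ) (t₀ : ℝ) (p : ℤ → ℤ) (t : ℝ) : ℝ :=
  x (t + (p ⌊t - t₀⌋ - ⌊t - t₀⌋ : ℤ))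

section splice

variable {x : ℝ → ℝ} {t₀ : ℝ} {p : ℤ → ℤ}

theorem splice_of_floor_eq {t : ℝ} {j : ℤ} (h : ⌊t - t₀⌋ = j) :
    splice x t₀ p t = x (t + (p j - j : ℤ)) := by
  rw [splice, h]

theorem IsSolution.splice {f : ℝ × ℝ → ℝ} (hper : ∀ t y : ℝ, f (t + 1, y) = f (t, y))
    (hx : IsSolution f x) (h₂ : Periodic x 2) (h₀ : x (t₀ + 1) = x t₀) (p : ℤ → ℤ) :
    IsSolution f (splice x t₀ p) :=
  IsSolution.glue_floor t₀ (fun j => hx.comp_add_intCast hper (p j - j)) fun j => by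
    simp only [add_assoc, ← Int.cast_add, h₂.apply_add_intCast_eq h₀]

theorem splice_periodic {n : ℤ} (hp : Periodic p n) : Periodic (splice x t₀ p) n := by
  intro t
  have hfloor : ⌊t + n - t₀⌋ = ⌊t - t₀⌋ + n := by rw [add_sub_right_comm, Int.floor_add_intCast]
  rw [splice_of_floor_eq hfloor, hp, splice]
  push_cast
  ring_nf

theorem not_periodic_splice {t₁ : ℝ} (hx : ∀ m : ℤ, x (t₁ + m + 1) ≠ x (t₁ + m)) {k : ℤ}
    (h₀ : p 0 = 1) (hk : p k = 0) : ¬ Periodic (splice x t₀ p) k := by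
  intro hz
  set t := t₁ + (-⌊t₁ - t₀⌋ : ℤ)
  have hfloor₀ : ⌊t - t₀⌋ = 0 := by
    rw [show t - t₀ = t₁ - t₀ + (-⌊t₁ - t₀⌋ : ℤ) by ring, Int.floor_add_intCast, add_neg_cancel]
  have hfloorₖ : ⌊t + k - t₀⌋ = k := by
    rw [add_sub_right_comm, Int.floor_add_intCast, hfloor₀, zero_add]
  have hzt := hz t
  rw [splice_of_floor_eq hfloor₀, splice_of_floor_eq hfloorₖ, h₀, hk] at hzt
  exact hx _ (by simpa using hzt.symm)

end splice

theorem period_two_implies_all_periods_general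
    (f : ℝ × ℝ → ℝ)
    (hper : ∀ t x : ℝ, f (t + 1, x) = f (t, x))
    (x : ℝ → ℝ) (hx : IsSolution f x)
    (hx2 : ∀ t : ℝ, x (t + 2) = x t)
    (t₁ : ℝ) (ht₁ : x (t₁ + 1) ≠ x t₁) :
    ∀ n : ℕ, 1 ≤ n → ∃ xn : ℝ → ℝ, IsSolution f xn ∧
      (∀ t : ℝ, xn (t + n) = xn t) ∧
      ∀ k : ℕ, 1 ≤ k → k < n → ¬ (∀ t : ℝ, xn (t + k) = xn t) := by
  intro n _
  have hΔ : Antiperiodic (Δ_[1] x) 1 := Periodic.fwdDiff_antiperiodic (by rwa [one_add_one_eq_two])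
  have hxc := hx.continuous
  obtain ⟨t₀, ht₀⟩ := hΔ.exists_eq_zero (by unfold fwdDiff; fun_prop)
  have hne : ∀ m : ℤ, x (t₁ + m + 1) ≠ x (t₁ + m) := fun m =>
    sub_ne_zero.1 (by simpa [fwdDiff] using hΔ.add_int_mul_ne_zero (sub_ne_zero.2 ht₁) m)
  set p : ℤ → ℤ := fun j => if (n : ℤ) ∣ j then 1 else 0
  have hp : Periodic p n := fun j => by simp only [p, dvd_add_self_right]
  refine ⟨splice x t₀ p, hx.splice hper hx2 (sub_eq_zero.1 ht₀) p,
    by simpa using splice_periodic hp, fun k hk hkn => ?_⟩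
  have hndvd : ¬ (n : ℤ) ∣ k := by
    rw [Int.natCast_dvd_natCast]
    exact fun h => by have := Nat.le_of_dvd hk h; omega
  simpa using not_periodic_splice (t₀ := t₀) hne (k := k) (by simp [p]) (by simp [p, hndvd])

theorem period_two_implies_all_periods
    (f : ℝ × ℝ → ℝ) (hf : Continuous f)
    (hper : ∀ t x : ℝ, f (t + 1, x) = f (t, x))
    (x : ℝ → ℝ) (hx : IsSolution f x)
    (hx2 : ∀ t : ℝ, x (t + 2) = x t)
    (t₁ : ℝ) (ht₁ : x (t₁ + 1) ≠ x t₁) :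
    ∀ n : ℕ, 1 ≤ n → ∃ xn : ℝ → ℝ, IsSolution f xn ∧
      (∀ t : ℝ, xn (t + n) = xn t) ∧
      ∀ k : ℕ, 1 ≤ k → k < n → ¬ (∀ t : ℝ, xn (t + k) = xn t) :=
  period_two_implies_all_periods_general f hper x hx hx2 t₁ ht₁
end

section
/- (Cancellation Lemma) Let f : ℝ × ℝ → ℝ be continuous and 1-periodic in the time variable. If the equation x' = f(t,x) admits a solution u with u(t+m) = u(t) for all t ∈ ℝ for some integer m ≥ 3, and u is not 1-periodic (there exists t* with u(t*+1) ≠ u(t*)), then the equation also admits a solution v with v(t+2) = v(t) for all t ∈ ℝ which is not 1-periodic (there exists s with v(s+1) ≠ v(s)). -/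
open Set Filter Function Topology AddCommGroup

section PeriodicExtension

variable {β : Type*} {p : ℝ} (hp : 0 < p)

noncomputable def periodicExtension (u : ℝ → β) (a : ℝ) : ℝ → β :=
  fun t => u (toIcoMod hp a t)

variable {u : ℝ → β} {a : ℝ}

theorem periodicExtension_periodic : Periodic (periodicExtension hp u a) p :=
  fun t => congrArg u (toIcoMod_add_right hp a t)

theorem periodicExtension_eq_comp_toIocMod (h : u (a + p) = u a) :
    periodicExtension hp u a = u ∘ toIocMod hp a := by
  ext t
  by_cases ht : a ≡ t [PMOD p]
  · simp only [periodicExtension, comp_apply, (modEq_iff_toIcoMod_eq_left hp).1 ht,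
      (modEq_iff_toIocMod_eq_right hp).1 ht, h]
  · simp only [periodicExtension, comp_apply, (not_modEq_iff_toIcoMod_eq_toIocMod hp).1 ht]

theorem periodicExtension_eqOn_Icc (h : u (a + p) = u a) :
    EqOn (periodicExtension hp u a) u (Icc a (a + p)) := by
  intro t ht
  rcases eq_or_lt_of_le ht.2 with rfl | hlt
  · simp only [periodicExtension, toIcoMod_add_right, toIcoMod_apply_left, h]
  · simp only [periodicExtension, (toIcoMod_eq_self hp).2 ⟨ht.1, hlt⟩]

theorem hasDerivWithinAt_toIcoMod (x : ℝ) : HasDerivWithinAt (toIcoMod hp a) 1 (Ici x) x := by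
  have hlin : HasDerivWithinAt (fun y => y - toIcoDiv hp a x • p) 1 (Ici x) x :=
    (hasDerivWithinAt_id x _).sub_const _
  refine hlin.congr_of_eventuallyEq ?_ rfl
  filter_upwards [eventuallyEq_toIcoDiv_nhdsGE hp a x] with y hy
  simp only [toIcoMod, hy]

theorem hasDerivWithinAt_toIocMod (x : ℝ) : HasDerivWithinAt (toIocMod hp a) 1 (Iic x) x := by
  have hlin : HasDerivWithinAt (fun y => y - toIocDiv hp a x • p) 1 (Iic x) x :=
    (hasDerivWithinAt_id x _).sub_const _
  refine hlin.congr_of_eventuallyEq ?_ rfl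
  filter_upwards [eventuallyEq_toIocDiv_nhdsLE hp a x] with y hy
  simp only [toIocMod, hy]

end PeriodicExtension

section Solutions

variable {f : ℝ × ℝ → ℝ} {u : ℝ → ℝ}

theorem IsSolution.continuous_s3 (hu : IsSolution f u) : Continuous u :=
  continuous_iff_continuousAt.2 fun t => (hu t).continuousAt

theorem IsSolution.hasDerivWithinAt_comp (hu : IsSolution f u) {φ : ℝ → ℝ} {s : Set ℝ}
    {t : ℝ} (hφ : HasDerivWithinAt φ 1 s t) (hft : ∀ y, f (φ t, y) = f (t, y)) :
    HasDerivWithinAt (u ∘ φ) (f (t, u (φ t))) s t := by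
  simpa only [mul_one, hft] using (hu (φ t)).comp_hasDerivWithinAt t hφ

theorem isSolution_periodicExtension {p : ℝ} (hp : 0 < p)
    (hf : ∀ x, Periodic (fun t => f (t, x)) p) (hu : IsSolution f u) {a : ℝ}
    (h : u (a + p) = u a) : IsSolution f (periodicExtension hp u a) := by
  intro t
  have hright : HasDerivWithinAt (periodicExtension hp u a)
      (f (t, periodicExtension hp u a t)) (Ici t) t :=
    hu.hasDerivWithinAt_comp (hasDerivWithinAt_toIcoMod hp t) fun y => (hf y).sub_zsmul_eq _
  have hleft : HasDerivWithinAt (periodicExtension hp u a)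
      (f (t, periodicExtension hp u a t)) (Iic t) t := by
    rw [periodicExtension_eq_comp_toIocMod hp h]
    exact hu.hasDerivWithinAt_comp (hasDerivWithinAt_toIocMod hp t)
      fun y => (hf y).sub_zsmul_eq _
  simpa only [Iic_union_Ici, hasDerivWithinAt_univ] using hleft.union hright

end Solutions

theorem Function.Periodic.exists_apply_add_eq {u : ℝ → ℝ} {c : ℝ} (hu : Periodic u c)
    (hc : c ≠ 0) (hcont : Continuous u) (d : ℝ) : ∃ t, u (t + d) = u t := by
  obtain ⟨_, ⟨tmax, rfl⟩, hmax⟩ := (hu.compact_of_continuous hc hcont).exists_isGreatest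
    (range_nonempty u)
  obtain ⟨_, ⟨tmin, rfl⟩, hmin⟩ := (hu.compact_of_continuous hc hcont).exists_isLeast
    (range_nonempty u)
  obtain ⟨t, ht⟩ := mem_range_of_exists_le_of_exists_ge
    ((hcont.comp (continuous_add_const d)).sub hcont) (c := 0)
    ⟨tmax, sub_nonpos.2 (hmax (mem_range_self _))⟩ ⟨tmin, sub_nonneg.2 (hmin (mem_range_self _))⟩
  exact ⟨t, sub_eq_zero.1 ht⟩

theorem Ici_add_one_subset_of_forall_Icc_subset {S : Set ℝ} {L : ℝ} (hL : 2 ≤ L)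
    (hS : ∀ z ∈ S, Icc (z + 1) (z + L) ⊆ S) {z₀ : ℝ} (hz₀ : z₀ ∈ S) : Ici (z₀ + 1) ⊆ S := by
  have hstep : ∀ k : ℕ, Icc (z₀ + 1) (z₀ + 1 + k) ⊆ S := by
    intro k
    induction k with
    | zero => simpa using hS z₀ hz₀ ⟨le_rfl, by linarith⟩
    | succ k ih =>
      intro x hx
      push_cast at hx
      by_cases hx1 : z₀ + 2 ≤ x
      · exact hS (x - 1) (ih ⟨by linarith, by linarith [hx.2]⟩) ⟨by linarith, by linarith⟩
      · exact hS z₀ hz₀ ⟨hx.1, by linarith⟩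
  intro x hx
  obtain ⟨k, hk⟩ := exists_nat_ge (x - (z₀ + 1))
  exact hstep k ⟨hx, by linarith⟩

theorem Function.Periodic.exists_eq_zero_ne_zero_mem_Icc {g : ℝ → ℝ} {c L : ℝ}
    (hg : Periodic g c) (hc : 0 < c) (hL : 2 ≤ L) {z₀ τ₀ : ℝ} (hz₀ : g z₀ = 0)
    (hτ₀ : g τ₀ ≠ 0) : ∃ z, g z = 0 ∧ ∃ τ ∈ Icc (z + 1) (z + L), g τ ≠ 0 := by
  by_contra! h
  have hzeros : Ici (z₀ + 1) ⊆ {z | g z = 0} :=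
    Ici_add_one_subset_of_forall_Icc_subset hL h hz₀
  obtain ⟨k, hk⟩ := exists_nat_ge ((z₀ + 1 - τ₀) / c)
  rw [div_le_iff₀ hc] at hk
  exact hτ₀ (hg.nat_mul k τ₀ ▸ hzeros (show z₀ + 1 ≤ τ₀ + k * c by linarith))

section Cancellation

variable {f : ℝ × ℝ → ℝ} (hf : ∀ x, Periodic (fun t => f (t, x)) 1)
include hf

theorem IsSolution.exists_periodic_of_periodic_succ {u : ℝ → ℝ} (hu : IsSolution f u) {n : ℕ}
    (hn : 2 ≤ n) (hun : Periodic u (n + 1 : ℕ)) (hu1 : ¬Periodic u 1) :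
    ∃ w, IsSolution f w ∧ Periodic w n ∧ ¬Periodic w 1 := by
  push_cast at hun
  have hn₀ : (0 : ℝ) < n := by positivity
  have hn₂ : (2 : ℝ) ≤ n := by exact_mod_cast hn
  obtain ⟨z₀, hz₀⟩ := (hun.exists_apply_add_eq (by positivity) hu.continuous_s3) 1
  obtain ⟨τ₀, hτ₀⟩ := not_forall.1 hu1
  obtain ⟨z, hz, τ, hτ, hτz⟩ :=
    ((hun.add_const 1).sub hun).exists_eq_zero_ne_zero_mem_Icc (by positivity) hn₂
      (g := fun t => u (t + 1) - u t) (sub_eq_zero.2 hz₀) (sub_ne_zero.2 hτ₀)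
  have hgap : u (z + 1 + n) = u (z + 1) := by
    rw [add_right_comm, add_assoc, hun z, sub_eq_zero.1 hz]
  have hfn : ∀ x, Periodic (fun t => f (t, x)) n := fun x => by simpa using (hf x).nat_mul n
  have heq := periodicExtension_eqOn_Icc hn₀ hgap
  refine ⟨periodicExtension hn₀ u (z + 1), isSolution_periodicExtension hn₀ hfn hu hgap,
    periodicExtension_periodic hn₀, fun hw1 => hτz ?_⟩
  rw [← heq ⟨hτ.1, by linarith [hτ.2]⟩, ← heq ⟨by linarith [hτ.1], by linarith [hτ.2]⟩,
    hw1 τ, sub_self]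

theorem IsSolution.exists_two_periodic {u : ℝ → ℝ} (hu : IsSolution f u) {n : ℕ} (hn : 2 ≤ n)
    (hun : Periodic u n) (hu1 : ¬Periodic u 1) :
    ∃ v, IsSolution f v ∧ Periodic v 2 ∧ ¬Periodic v 1 := by
  induction n, hn using Nat.le_induction generalizing u with
  | base => exact ⟨u, hu, by exact_mod_cast hun, hu1⟩
  | succ n hn ih =>
    obtain ⟨w, hw, hwn, hw1⟩ := hu.exists_periodic_of_periodic_succ hf hn hun hu1
    exact ih hw hwn hw1

end Cancellation

theorem cancellation_lemma_general
    (f : ℝ × ℝ → ℝ)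
    (hper : ∀ t x : ℝ, f (t + 1, x) = f (t, x))
    (u : ℝ → ℝ) (m : ℕ) (hm : 3 ≤ m)
    (hu : IsSolution f u)
    (hum : ∀ t : ℝ, u (t + m) = u t)
    (tstar : ℝ) (htstar : u (tstar + 1) ≠ u tstar) :
    ∃ v : ℝ → ℝ, IsSolution f v ∧ (∀ t : ℝ, v (t + 2) = v t) ∧
      ∃ s : ℝ, v (s + 1) ≠ v s := by
  obtain ⟨v, hv, hv2, hv1⟩ :=
    hu.exists_two_periodic (fun x t => hper t x) (by omega) hum fun h => htstar (h tstar)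
  exact ⟨v, hv, hv2, not_forall.1 hv1⟩

theorem cancellation_lemma
    (f : ℝ × ℝ → ℝ) (hf : Continuous f)
    (hper : ∀ t x : ℝ, f (t + 1, x) = f (t, x))
    (u : ℝ → ℝ) (m : ℕ) (hm : 3 ≤ m)
    (hu : IsSolution f u)
    (hum : ∀ t : ℝ, u (t + m) = u t)
    (tstar : ℝ) (htstar : u (tstar + 1) ≠ u tstar) :
    ∃ v : ℝ → ℝ, IsSolution f v ∧ (∀ t : ℝ, v (t + 2) = v t) ∧
      ∃ s : ℝ, v (s + 1) ≠ v s :=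
  cancellation_lemma_general f hper u m hm hu hum tstar htstar
end

section
/- (Coin-tossing realization of all symbol sequences by solutions) Let f : ℝ × ℝ → ℝ be continuous and 1-periodic in the time variable, and suppose the equation x' = f(t,x) admits a solution x with x(t+2) = x(t) for all t ∈ ℝ and x(t₁+1) > x(t₁) for some t₁ ∈ ℝ. Then there exist real numbers p < q and s₁ ∈ ℝ such that for every two-sided sequence η = (η_i)_{i∈ℤ} ∈ {0,1}^ℤ there exists a solution w : ℝ → ℝ of x' = f(t,x) satisfying, for all i ∈ ℤ: w(s₁+i) = q if η_i = 0 and w(s₁+i) = p if η_i = 1. -/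
open Set Filter Topology

theorem HasDerivAt.of_eventuallyEq_nhdsLE_nhdsGE {w g h : ℝ → ℝ} {d t : ℝ}
    (hg : HasDerivAt g d t) (hh : HasDerivAt h d t)
    (hwg : w =ᶠ[𝓝[≤] t] g) (hwh : w =ᶠ[𝓝[≥] t] h) : HasDerivAt w d t := by
  have hleft := hg.hasDerivWithinAt.congr_of_eventuallyEq hwg (hwg.eq_of_nhdsWithin self_mem_Iic)
  have hright := hh.hasDerivWithinAt.congr_of_eventuallyEq hwh (hwh.eq_of_nhdsWithin self_mem_Ici)
  simpa only [Iic_union_Ici, hasDerivWithinAt_univ] using hleft.union hright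

noncomputable def glue (s : ℝ) (c : ℤ → ℝ → ℝ) (t : ℝ) : ℝ :=
  c ⌈t - s⌉ t

theorem glue_eq_of_mem_Icc {s : ℝ} {c : ℤ → ℝ → ℝ}
    (hmatch : ∀ i : ℤ, c (i + 1) (s + i) = c i (s + i)) {i : ℤ} {t : ℝ}
    (ht : t ∈ Icc (s + i - 1) (s + i)) : glue s c t = c i t := by
  by_cases hleft : t = s + i - 1
  · have hceil : ⌈t - s⌉ = i - 1 := by
      rw [Int.ceil_eq_iff]; push_cast; constructor <;> linarith
    have hmatch' := hmatch (i - 1)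
    rw [sub_add_cancel] at hmatch'
    rw [glue, hceil, hleft]
    push_cast at hmatch' ⊢
    rw [add_sub_assoc, hmatch']
  · have hceil : ⌈t - s⌉ = i := by
      rw [Int.ceil_eq_iff]
      exact ⟨by linarith [lt_of_le_of_ne ht.1 (Ne.symm hleft)], by linarith [ht.2]⟩
    rw [glue, hceil]

namespace IsSolution

variable {f : ℝ × ℝ → ℝ} {x : ℝ → ℝ}

theorem continuous_s9 (hx : IsSolution f x) : Continuous x :=
  continuous_iff_continuousAt.2 fun t => (hx t).continuousAt

theorem comp_add_const {c : ℝ} (hper : ∀ t y : ℝ, f (t + c, y) = f (t, y))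
    (hx : IsSolution f x) : IsSolution f (fun t => x (t + c)) := fun t => by
  simpa only [hper] using (hx (t + c)).comp_add_const t c

theorem glue {s : ℝ} {c : ℤ → ℝ → ℝ} (hc : ∀ i, IsSolution f (c i))
    (hmatch : ∀ i : ℤ, c (i + 1) (s + i) = c i (s + i)) : IsSolution f (_root_.glue s c) := by
  intro t
  set k := ⌈t - s⌉
  set m := ⌊t - s⌋
  have hwk : _root_.glue s c =ᶠ[𝓝[≤] t] c k := by
    have hk : t ∈ Ioc (s + k - 1) (s + k) :=
      ⟨by linarith [Int.ceil_lt_add_one (t - s)], by linarith [Int.le_ceil (t - s)]⟩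
    filter_upwards [Icc_mem_nhdsLE_of_mem hk] with u hu
    exact glue_eq_of_mem_Icc hmatch hu
  have hwm : _root_.glue s c =ᶠ[𝓝[≥] t] c (m + 1) := by
    have hm : t ∈ Ico (s + m) (s + m + 1) :=
      ⟨by linarith [Int.floor_le (t - s)], by linarith [Int.lt_floor_add_one (t - s)]⟩
    filter_upwards [Icc_mem_nhdsGE_of_mem hm] with u hu
    exact glue_eq_of_mem_Icc hmatch (by push_cast; rwa [← add_assoc, add_sub_cancel_right])
  have hk := hwk.eq_of_nhdsWithin self_mem_Iic
  have hm := hwm.eq_of_nhdsWithin self_mem_Ici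
  refine .of_eventuallyEq_nhdsLE_nhdsGE ?_ ?_ hwk hwm
  · rw [hk]; exact hc k t
  · rw [hm]; exact hc (m + 1) t

end IsSolution

theorem Function.Periodic.exists_mem_Icc_apply_add_one_eq {x : ℝ → ℝ} (hxc : Continuous x)
    (hx2 : Function.Periodic x 2) (a : ℝ) : ∃ s ∈ Icc a (a + 1), x (s + 1) = x s := by
  set g : ℝ → ℝ := fun t => x (t + 1) - x t
  have hflip : g (a + 1) = -g a := by
    simp only [g, add_assoc, one_add_one_eq_two, hx2 a]; ring
  have hzero : (0 : ℝ) ∈ uIcc (g a) (g (a + 1)) := by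
    rw [hflip, mem_uIcc]
    rcases le_total (g a) 0 with h | h
    · exact Or.inl ⟨h, by linarith⟩
    · exact Or.inr ⟨by linarith, h⟩
  have hgc : ContinuousOn g (uIcc a (a + 1)) := by fun_prop
  obtain ⟨s, hs, hgs⟩ := intermediate_value_uIcc hgc hzero
  rw [uIcc_of_le (by linarith)] at hs
  exact ⟨s, hs, sub_eq_zero.1 hgs⟩

theorem Function.Periodic.apply_add_intCast_eq_s9 {x : ℝ → ℝ} (hx2 : Function.Periodic x 2)
    {s : ℝ} (hs : x (s + 1) = x s) (k : ℤ) : x (s + k) = x s := by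
  obtain ⟨n, rfl | rfl⟩ := Int.even_or_odd' k
  · simpa only [Int.cast_mul, Int.cast_ofNat, mul_comm] using (hx2.int_mul n) s
  · have h := (hx2.int_mul n) (s + 1)
    push_cast at h ⊢
    rwa [mul_comm, ← add_assoc, add_right_comm, h]

theorem coin_tossing_realization_general
    (f : ℝ × ℝ → ℝ)
    (hper : ∀ t x : ℝ, f (t + 1, x) = f (t, x))
    (x : ℝ → ℝ) (hx : IsSolution f x)
    (hx2 : ∀ t : ℝ, x (t + 2) = x t)
    (t₁ : ℝ) (ht₁ : x t₁ < x (t₁ + 1)) :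
    ∃ p q s₁ : ℝ, p < q ∧
      ∀ η : ℤ → Fin 2, ∃ w : ℝ → ℝ, IsSolution f w ∧
        ∀ i : ℤ, (η i = 0 → w (s₁ + i) = q) ∧ (η i = 1 → w (s₁ + i) = p) := by
  obtain ⟨s, hs, hxs⟩ := Function.Periodic.exists_mem_Icc_apply_add_one_eq hx.continuous_s9 hx2 t₁
  have hconst := Function.Periodic.apply_add_intCast_eq_s9 hx2 hxs
  have hperℤ (n : ℤ) (t y : ℝ) : f (t + n, y) = f (t, y) := by
    simpa using (Function.Periodic.int_mul (f := fun t => f (t, y)) (fun t => hper t y) n) t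
  refine ⟨x t₁, x (t₁ + 1), t₁, ht₁, fun η => ?_⟩
  set n : ℤ → ℤ := fun i => 1 - i - (η i : ℕ)
  set c : ℤ → ℝ → ℝ := fun i t => x (t + n i)
  have hcs (i j : ℤ) : c j (s + i) = x s := by
    simpa only [c, add_assoc, Int.cast_add] using hconst (i + n j)
  have hmatch (i : ℤ) : c (i + 1) (s + i) = c i (s + i) := by rw [hcs, hcs]
  refine ⟨glue s c, IsSolution.glue (fun i => hx.comp_add_const (hperℤ (n i))) hmatch,
    fun i => ?_⟩
  have hi : t₁ + i ∈ Icc (s + i - 1) (s + i) := ⟨by linarith [hs.2], by linarith [hs.1]⟩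
  rw [glue_eq_of_mem_Icc hmatch hi]
  constructor <;> intro hη <;> simp [c, n, hη]

theorem coin_tossing_realization
    (f : ℝ × ℝ → ℝ) (hf : Continuous f)
    (hper : ∀ t x : ℝ, f (t + 1, x) = f (t, x))
    (x : ℝ → ℝ) (hx : IsSolution f x)
    (hx2 : ∀ t : ℝ, x (t + 2) = x t)
    (t₁ : ℝ) (ht₁ : x t₁ < x (t₁ + 1)) :
    ∃ p q s₁ : ℝ, p < q ∧
      ∀ η : ℤ → Fin 2, ∃ w : ℝ → ℝ, IsSolution f w ∧
        ∀ i : ℤ, (η i = 0 → w (s₁ + i) = q) ∧ (η i = 1 → w (s₁ + i) = p) :=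
  coin_tossing_realization_general f hper x hx hx2 t₁ ht₁
end
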